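/- arXiv:2102.00235 — 2 statements merged into one kernel-verified Lean document; each statement's English description precedes it below -/
import Mathlib

section
/- Let X ~ N(μ, σ²) with σ > 0. Then for every λ < 0, log E[ exp( λ (X² − E[X²]) ) ] ≤ λ² (σ⁴ + 2 μ² σ²). -/
/-!
Multiplying the density of `N(μ, v)` by `exp (t x²)` gives, for `a = 1 - 2 t v > 0`, a constant
multiple of the density of `N(μ / a, v / a)` (exponential tilting). This yields the closed form
`log E[exp (t (X² - E[X²]))] = -log a / 2 - t v + 2 t² v μ² / a`. For `t < 0` we have `a ≥ 1`, so the
last term is at most `2 t² v μ²`, and `log (1 + y) ≥ y - y² / 2` bounds the first two by `t² v²`.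
-/

open MeasureTheory ProbabilityTheory Real
open scoped NNReal

lemma gaussianPDFReal_mul_exp_mul_sq (μ : ℝ) {v : ℝ≥0} (hv : v ≠ 0) {t : ℝ}
    (ht : 0 < 1 - 2 * t * v) (x : ℝ) :
    gaussianPDFReal μ v x * exp (t * x ^ 2)
      = exp (t * μ ^ 2 / (1 - 2 * t * v)) / √(1 - 2 * t * v)
        * gaussianPDFReal (μ / (1 - 2 * t * v)) (v / (1 - 2 * t * v).toNNReal) x := by
  set a := 1 - 2 * t * v
  have hexponent : -(x - μ) ^ 2 / (2 * v) + t * x ^ 2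
      = t * μ ^ 2 / a + -(x - μ / a) ^ 2 / (2 * (v / a)) := by
    field_simp
    ring
  have hsqrt : √(2 * π * (v / a)) = √(2 * π * v) / √a := by
    rw [← sqrt_div' _ ht.le, mul_div_assoc]
  rw [gaussianPDFReal, gaussianPDFReal, NNReal.coe_div, coe_toNNReal _ ht.le, mul_assoc,
    ← exp_add, hexponent, exp_add, hsqrt]
  have hsqrt_pos : 0 < √a := sqrt_pos.2 ht
  field_simp

lemma integral_exp_mul_sq_gaussianReal (μ : ℝ) (v : ℝ≥0) {t : ℝ} (ht : 0 < 1 - 2 * t * v) :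
    ∫ x, exp (t * x ^ 2) ∂gaussianReal μ v
      = exp (t * μ ^ 2 / (1 - 2 * t * v)) / √(1 - 2 * t * v) := by
  rcases eq_or_ne v 0 with rfl | hv
  · simp
  have hv' : v / (1 - 2 * t * v).toNNReal ≠ 0 := by
    simp only [ne_eq, div_eq_zero_iff, hv, Real.toNNReal_eq_zero, not_le, false_or]
    exact ht
  simp_rw [integral_gaussianReal_eq_integral_smul hv, smul_eq_mul,
    gaussianPDFReal_mul_exp_mul_sq μ hv ht, integral_const_mul,
    integral_gaussianPDFReal_eq_one _ hv', mul_one]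

lemma log_integral_exp_mul_sq_sub_gaussianReal (μ : ℝ) (v : ℝ≥0) {t : ℝ}
    (ht : 0 < 1 - 2 * t * v) :
    log (∫ x, exp (t * (x ^ 2 - (v + μ ^ 2))) ∂gaussianReal μ v)
      = -log (1 - 2 * t * v) / 2 - t * v + 2 * t ^ 2 * v * μ ^ 2 / (1 - 2 * t * v) := by
  simp_rw [mul_sub, sub_eq_add_neg (t * _), exp_add, integral_mul_const,
    integral_exp_mul_sq_gaussianReal μ v ht]
  rw [log_mul (by positivity) (exp_pos _).ne', log_div (exp_pos _).ne' (sqrt_pos.2 ht).ne',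
    log_exp, log_exp, log_sqrt ht.le]
  have hmean : t * μ ^ 2 / (1 - 2 * t * v)
      = t * μ ^ 2 + 2 * t ^ 2 * v * μ ^ 2 / (1 - 2 * t * v) := by
    rw [← sub_eq_iff_eq_add', div_sub' ht.ne']
    congr 1
    ring
  rw [hmean]
  ring

lemma Real.sub_sq_div_two_le_log_one_add {y : ℝ} (hy : 0 ≤ y) : y - y ^ 2 / 2 ≤ log (1 + y) :=
  (le_log_one_add_of_nonneg hy).trans' <| by
    rw [le_div_iff₀ (by linarith)]
    nlinarith [pow_nonneg hy 3]

theorem stmt_9_general (μ σ : ℝ) (l : ℝ) (hl : l < 0) :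
    Real.log (∫ x, Real.exp (l * (x ^ 2 - (σ ^ 2 + μ ^ 2)))
        ∂(gaussianReal μ (Real.toNNReal (σ ^ 2))))
      ≤ l ^ 2 * (σ ^ 4 + 2 * μ ^ 2 * σ ^ 2) := by
  have hv : ((σ ^ 2).toNNReal : ℝ) = σ ^ 2 := coe_toNNReal _ (sq_nonneg σ)
  have hy : 0 ≤ -2 * l * σ ^ 2 := by nlinarith [sq_nonneg σ]
  have hlog := log_integral_exp_mul_sq_sub_gaussianReal μ (σ ^ 2).toNNReal (t := l)
    (by rw [hv]; linarith)
  rw [hv] at hlog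
  rw [hlog]
  have hvar : -log (1 - 2 * l * σ ^ 2) / 2 - l * σ ^ 2 ≤ l ^ 2 * σ ^ 4 := by
    have := sub_sq_div_two_le_log_one_add hy
    rw [show 1 + -2 * l * σ ^ 2 = 1 - 2 * l * σ ^ 2 by ring] at this
    nlinarith
  have hmean : 2 * l ^ 2 * σ ^ 2 * μ ^ 2 / (1 - 2 * l * σ ^ 2) ≤ 2 * l ^ 2 * σ ^ 2 * μ ^ 2 :=
    div_le_self (by positivity) (by linarith)
  linarith

/-- Sub-Gaussian bound on the centered log-MGF of the square of a Gaussian `X ~ N(μ, σ²)`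
for negative arguments: for `λ < 0`,
`log E[exp(λ(X² - E[X²]))] ≤ λ²(σ⁴ + 2μ²σ²)`, where `E[X²] = σ² + μ²`. -/
theorem stmt_9 (μ σ : ℝ) (hσ : 0 < σ) (l : ℝ) (hl : l < 0) :
    Real.log (∫ x, Real.exp (l * (x ^ 2 - (σ ^ 2 + μ ^ 2)))
        ∂(gaussianReal μ (Real.toNNReal (σ ^ 2))))
      ≤ l ^ 2 * (σ ^ 4 + 2 * μ ^ 2 * σ ^ 2) :=
  stmt_9_general μ σ l hl
end

section
/- Let G_1,…,G_m be i.i.d. standard Gaussian random variables and V = Σ_{j=1}^m G_j². Then for every real p ≥ 1, ( E[ |V³ − E[V³]|^p ] )^{1/p} ≤ 2⁶ (3p + m/2)³. -/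
/-!
For `0 < t < 1/2` the moment generating function of `V = ∑ j, G j ^ 2` is `(1 - 2t) ^ (-m/2)`,
so the pointwise bound `x ^ q ≤ (q / (t e)) ^ q * exp (t x)` gives
`E[V ^ q] ≤ (q / (t e)) ^ q (1 - 2t) ^ (-m/2)`; at `t = q / (2q + m)` this is at most
`(2q + m) ^ q`.
Since `V ^ 3` and `E[V ^ 3]` are nonnegative, `|V ^ 3 - E[V ^ 3]| ^ p ≤ V ^ (3p) + E[V ^ 3] ^ p`,
and both terms have expectation at most `(6p + m) ^ (3p)`.
-/

open MeasureTheory ProbabilityTheory Real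

namespace Real

lemma rpow_le_mul_exp_mul {q t x : ℝ} (hq : 0 < q) (ht : 0 < t) (hx : 0 ≤ x) :
    x ^ q ≤ (q / (t * exp 1)) ^ q * exp (t * x) := by
  rcases hx.eq_or_lt with rfl | hx
  · rw [zero_rpow hq.ne']
    positivity
  have hlog : log (t * x / q) ≤ t * x / q - 1 := log_le_sub_one_of_pos (by positivity)
  rw [rpow_def_of_pos hx, rpow_def_of_pos (by positivity), ← exp_add, exp_le_exp,
    log_div hq.ne' (by positivity), log_mul ht.ne' (by positivity), log_exp]
  rw [log_div (by positivity) hq.ne', log_mul ht.ne' hx.ne'] at hlog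
  have : t * x / q * q = t * x := by field_simp
  nlinarith

lemma one_add_div_rpow_le_exp {q a : ℝ} (hq : 0 ≤ q) (ha : 0 < a) :
    (1 + q / a) ^ a ≤ exp q := by
  calc (1 + q / a) ^ a ≤ exp (q / a) ^ a := by
        gcongr
        linarith [add_one_le_exp (q / a)]
    _ = exp q := by rw [← exp_mul, div_mul_cancel₀ q ha.ne']

lemma abs_sub_rpow_le_rpow_add_rpow {x y p : ℝ} (hx : 0 ≤ x) (hy : 0 ≤ y) (hp : 0 ≤ p) :
    |x - y| ^ p ≤ x ^ p + y ^ p := by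
  rcases le_total x y with hxy | hyx
  · calc |x - y| ^ p ≤ y ^ p := by gcongr; rw [abs_sub_comm, abs_of_nonneg (by linarith)]; linarith
      _ ≤ x ^ p + y ^ p := le_add_of_nonneg_left (rpow_nonneg hx p)
  · calc |x - y| ^ p ≤ x ^ p := by gcongr; rw [abs_of_nonneg (by linarith)]; linarith
      _ ≤ x ^ p + y ^ p := le_add_of_nonneg_right (rpow_nonneg hy p)

end Real

lemma mgf_sq_gaussianReal {t : ℝ} (ht : t < 1 / 2) :
    mgf (fun x => x ^ 2) (gaussianReal 0 1) t = (√(1 - 2 * t))⁻¹ := by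
  have hb : 0 < 1 / 2 - t := by linarith
  have hdens : ∀ x : ℝ, gaussianPDFReal 0 1 x • exp (t * x ^ 2)
      = (√(2 * π))⁻¹ * exp (-(1 / 2 - t) * x ^ 2) := by
    intro x
    simp only [gaussianPDFReal, NNReal.coe_one, mul_one, sub_zero, smul_eq_mul]
    rw [mul_assoc, ← exp_add]
    ring_nf
  rw [mgf, integral_gaussianReal_eq_integral_smul one_ne_zero]
  simp_rw [hdens]
  rw [integral_const_mul, integral_gaussian, ← sqrt_inv, ← sqrt_mul (by positivity), ← sqrt_inv]
  congr 1
  field_simp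

lemma integral_abs_sub_rpow_le {Ω : Type*} [MeasurableSpace Ω] {P : Measure Ω}
    [IsProbabilityMeasure P] {X : Ω → ℝ} {c p : ℝ} (hX : ∀ ω, 0 ≤ X ω) (hc : 0 ≤ c) (hp : 0 ≤ p)
    (hint : Integrable (fun ω => X ω ^ p) P) :
    ∫ ω, |X ω - c| ^ p ∂P ≤ ∫ ω, X ω ^ p ∂P + c ^ p := by
  calc ∫ ω, |X ω - c| ^ p ∂P ≤ ∫ ω, X ω ^ p + c ^ p ∂P :=
        integral_mono_of_nonneg (ae_of_all _ fun ω => by positivity)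
          (hint.add (integrable_const _))
          (ae_of_all _ fun ω => abs_sub_rpow_le_rpow_add_rpow (hX ω) hc hp)
    _ = ∫ ω, X ω ^ p ∂P + c ^ p := by
        rw [integral_add hint (integrable_const _), integral_const, probReal_univ, one_smul]

section ChiSquare

variable {Ω ι : Type*} [MeasurableSpace Ω] {P : Measure Ω} [Fintype ι] {G : ι → Ω → ℝ}

lemma integrable_rpow_of_integrable_exp_mul {Y : Ω → ℝ} {q t : ℝ} (hY : AEMeasurable Y P)
    (hY₀ : ∀ ω, 0 ≤ Y ω) (hq : 0 < q) (ht : 0 < t) (hint : Integrable (fun ω => exp (t * Y ω)) P) :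
    Integrable (fun ω => Y ω ^ q) P := by
  refine (hint.const_mul ((q / (t * exp 1)) ^ q)).mono' (hY.pow_const q).aestronglyMeasurable
    (ae_of_all _ fun ω => ?_)
  rw [norm_of_nonneg (rpow_nonneg (hY₀ ω) q)]
  exact rpow_le_mul_exp_mul hq ht (hY₀ ω)

lemma integral_rpow_le_mul_mgf {Y : Ω → ℝ} {q t : ℝ} (hY₀ : ∀ ω, 0 ≤ Y ω) (hq : 0 < q)
    (ht : 0 < t) (hint : Integrable (fun ω => exp (t * Y ω)) P) :
    ∫ ω, Y ω ^ q ∂P ≤ (q / (t * exp 1)) ^ q * mgf Y P t := by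
  rw [mgf, ← integral_const_mul]
  exact integral_mono_of_nonneg (ae_of_all _ fun ω => rpow_nonneg (hY₀ ω) q)
    (hint.const_mul _) (ae_of_all _ fun ω => rpow_le_mul_exp_mul hq ht (hY₀ ω))

lemma aemeasurable_of_map_eq_gaussianReal {X : Ω → ℝ} (hX : P.map X = gaussianReal 0 1) :
    AEMeasurable X P := by
  by_contra h
  rw [Measure.map_of_not_aemeasurable h] at hX
  exact IsProbabilityMeasure.ne_zero _ hX.symm

lemma mgf_sum_sq_of_iIndepFun_gaussianReal (hindep : iIndepFun G P)
    (hlaw : ∀ j, P.map (G j) = gaussianReal 0 1) {t : ℝ} (ht : t < 1 / 2) :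
    mgf (fun ω => ∑ j, G j ω ^ 2) P t = (√(1 - 2 * t))⁻¹ ^ Fintype.card ι := by
  have hG j : AEMeasurable (G j) P := aemeasurable_of_map_eq_gaussianReal (hlaw j)
  have hsq : iIndepFun (fun j ω => G j ω ^ 2) P :=
    hindep.comp (fun _ x => x ^ 2) fun _ => measurable_id.pow_const 2
  have hsum : (fun ω => ∑ j, G j ω ^ 2) = ∑ j, fun ω => G j ω ^ 2 := by
    ext ω; simp
  rw [hsum, hsq.mgf_sum₀ (fun j => (hG j).pow_const 2), ← Finset.card_univ, ← Finset.prod_const]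
  refine Finset.prod_congr rfl fun j _ => ?_
  rw [← mgf_sq_gaussianReal ht, ← hlaw j, mgf_map (hG j) (by fun_prop)]
  rfl

variable [IsProbabilityMeasure P] (hindep : iIndepFun G P)
  (hlaw : ∀ j, P.map (G j) = gaussianReal 0 1)
include hindep hlaw

lemma integrable_exp_mul_sum_sq {t : ℝ} (ht : t < 1 / 2) :
    Integrable (fun ω => exp (t * ∑ j, G j ω ^ 2)) P := by
  rw [← mgf_pos_iff, mgf_sum_sq_of_iIndepFun_gaussianReal hindep hlaw ht]
  have : 0 < 1 - 2 * t := by linarith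
  positivity

lemma integrable_sum_sq_rpow {q : ℝ} (hq : 0 < q) :
    Integrable (fun ω => (∑ j, G j ω ^ 2) ^ q) P :=
  integrable_rpow_of_integrable_exp_mul
    (Finset.aemeasurable_fun_sum _ fun j _ =>
      (aemeasurable_of_map_eq_gaussianReal (hlaw j)).pow_const 2)
    (fun ω => by positivity) hq (by norm_num : (0 : ℝ) < 1 / 4)
    (integrable_exp_mul_sum_sq hindep hlaw (by norm_num))

lemma integral_sum_sq_rpow_le [Nonempty ι] {q : ℝ} (hq : 0 < q) :
    ∫ ω, (∑ j, G j ω ^ 2) ^ q ∂P ≤ (2 * (q + Fintype.card ι / 2)) ^ q := by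
  set a : ℝ := Fintype.card ι / 2 with ha_def
  have ha : 0 < a := by positivity
  -- the minimiser of `t ↦ t ^ (-q) * (1 - 2 t) ^ (-a)`
  set t := q / (2 * (q + a)) with ht_def
  have ht : 0 < t := by positivity
  have ht' : t < 1 / 2 := by
    rw [div_lt_iff₀ (by positivity)]
    linarith
  have hmgf : (√(1 - 2 * t))⁻¹ ^ Fintype.card ι = (1 + q / a) ^ a := by
    have : 1 - 2 * t = (1 + q / a)⁻¹ := by
      rw [ht_def]
      field_simp
      ring
    rw [this, sqrt_inv, inv_inv, sqrt_eq_rpow, ← rpow_natCast, ← rpow_mul (by positivity), ha_def]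
    ring_nf
  calc ∫ ω, (∑ j, G j ω ^ 2) ^ q ∂P
      ≤ (q / (t * exp 1)) ^ q * mgf (fun ω => ∑ j, G j ω ^ 2) P t :=
        integral_rpow_le_mul_mgf (fun ω => by positivity) hq ht
          (integrable_exp_mul_sum_sq hindep hlaw ht')
    _ ≤ (2 * (q + a) / exp 1) ^ q * exp q := by
        rw [mgf_sum_sq_of_iIndepFun_gaussianReal hindep hlaw ht', hmgf]
        have : q / (t * exp 1) = 2 * (q + a) / exp 1 := by
          rw [ht_def]
          field_simp
        rw [this]
        gcongr
        exact one_add_div_rpow_le_exp hq.le ha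
    _ = (2 * (q + a)) ^ q := by
        rw [← exp_one_rpow q, ← mul_rpow (by positivity) (by positivity),
          div_mul_cancel₀ _ (exp_pos 1).ne']

lemma integral_abs_sum_sq_cube_sub_rpow_le [Nonempty ι] {p : ℝ} (hp : 1 ≤ p) :
    ∫ ω, |(∑ j, G j ω ^ 2) ^ 3 - ∫ ω', (∑ j, G j ω' ^ 2) ^ 3 ∂P| ^ p ∂P
      ≤ 2 * (2 * (3 * p + Fintype.card ι / 2)) ^ (3 * p) := by
  have hp₀ : 0 < p := by linarith
  have hcube ω : ((∑ j, G j ω ^ 2) ^ 3) ^ p = (∑ j, G j ω ^ 2) ^ (3 * p) := by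
    rw [← rpow_natCast_mul (by positivity)]
    norm_num
  set n : ℝ := (Fintype.card ι : ℝ)
  set c := ∫ ω', (∑ j, G j ω' ^ 2) ^ 3 ∂P
  have hc₀ : 0 ≤ c := integral_nonneg fun ω => by positivity
  have hc : c ^ p ≤ (2 * (3 * p + n / 2)) ^ (3 * p) := by
    have h3 : c ≤ (2 * (3 + n / 2)) ^ (3 : ℝ) := by
      simpa only [rpow_ofNat] using integral_sum_sq_rpow_le hindep hlaw (q := 3) (by norm_num)
    calc c ^ p ≤ ((2 * (3 + n / 2)) ^ (3 : ℝ)) ^ p := by gcongr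
      _ = (2 * (3 + n / 2)) ^ (3 * p) := by rw [← rpow_mul (by positivity)]
      _ ≤ (2 * (3 * p + n / 2)) ^ (3 * p) := by gcongr; linarith
  have h := integral_abs_sub_rpow_le (X := fun ω => (∑ j, G j ω ^ 2) ^ 3) (fun ω => by positivity)
    hc₀ hp₀.le (by simpa only [hcube] using integrable_sum_sq_rpow hindep hlaw (by positivity))
  simp only [hcube] at h
  linarith [integral_sum_sq_rpow_le hindep hlaw (q := 3 * p) (by positivity)]

end ChiSquare

/-- L_p norm bound for the centered third power of a chi-square random variable with
`m` degrees of freedom: `‖V³ - E[V³]‖_{L_p} ≤ 2⁶ (3p + m/2)³` for every real `p ≥ 1`,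
where `V = ∑ j, (G j)^2` for i.i.d. standard Gaussians `G j`. -/
theorem stmt_12 {Ω : Type*} [MeasurableSpace Ω] (P : Measure Ω) [IsProbabilityMeasure P]
    (m : ℕ) (hm : 0 < m) (G : Fin m → Ω → ℝ)
    (hindep : iIndepFun G P)
    (hlaw : ∀ j, Measure.map (G j) P = gaussianReal 0 1)
    (p : ℝ) (hp : 1 ≤ p) :
    (∫ ω, |(∑ j, G j ω ^ 2) ^ 3 - ∫ ω', (∑ j, G j ω' ^ 2) ^ 3 ∂P| ^ p ∂P) ^ (1 / p)
      ≤ 2 ^ 6 * (3 * p + m / 2) ^ 3 := by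
  have : Nonempty (Fin m) := Fin.pos_iff_nonempty.mp hm
  have hp₀ : 0 < p := by linarith
  have hmoment := integral_abs_sum_sq_cube_sub_rpow_le hindep hlaw hp
  rw [Fintype.card_fin] at hmoment
  calc _ ≤ (2 * (2 * (3 * p + m / 2)) ^ (3 * p)) ^ (1 / p) := by gcongr
    _ = 2 ^ (1 / p) * (2 * (3 * p + m / 2)) ^ 3 := by
        rw [mul_rpow (by norm_num) (by positivity), ← rpow_mul (by positivity)]
        field_simp
        norm_num
    _ ≤ 2 ^ (1 : ℝ) * (2 * (3 * p + m / 2)) ^ 3 := by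
        gcongr
        · norm_num
        · exact div_le_one_of_le₀ hp hp₀.le
    _ ≤ 2 ^ 6 * (3 * p + m / 2) ^ 3 := by
        rw [rpow_one]
        nlinarith [pow_nonneg (by positivity : (0 : ℝ) ≤ 3 * p + m / 2) 3]
end
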